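/- arXiv:1807.09367 — 2 statements merged into one kernel-verified Lean document; each statement's English description precedes it below -/
import Mathlib

section
/- For y ≥ 0 and h ≥ 0, the integral ∫₀^∞ exp(-t² + 2ty + h·log t) dt is bounded above by (1 + √π)·exp(F(t₀)), where F(t) = -t² + 2ty + h·log t and t₀ is the unique positive critical point of F. -/
open MeasureTheory Real

/-- Laplace-method upper bound: for `y ≥ 0`, `h ≥ 0`,
`∫₀^∞ e^{F(t)} dt ≤ (1+√π) e^{F(t₀)}` where `F(t) = -t² + 2ty + h log t` and
`t₀ = y/2 + √(h/2 + y²/4)` is the positive critical point of `F`. -/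
theorem stmt_1 (y h : ℝ) (hy : 0 ≤ y) (hh : 0 ≤ h) :
    (∫ t in Set.Ioi (0:ℝ), Real.exp (-t^2 + 2*t*y + h * Real.log t)) ≤
      (1 + Real.sqrt Real.pi) *
        Real.exp (-(y/2 + Real.sqrt (h/2 + y^2/4))^2
          + 2*(y/2 + Real.sqrt (h/2 + y^2/4))*y
          + h * Real.log (y/2 + Real.sqrt (h/2 + y^2/4))) := by
  set s := Real.sqrt (h/2 + y^2/4) with hs
  set t₀ := y/2 + s with ht0
  have hsnn : 0 ≤ s := Real.sqrt_nonneg _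
  have hssq : s^2 = h/2 + y^2/4 := Real.sq_sqrt (by positivity)
  have ht0nn : 0 ≤ t₀ := by positivity
  clear_value s t₀
  have ht0sq : t₀^2 = t₀*y + h/2 := by
    rw [ht0]; nlinarith [hssq]
  set c := Real.exp (-t₀^2 + 2*t₀*y + h * Real.log t₀) with hc
  have hcpos : 0 < c := Real.exp_pos _
  have key : ∀ t ∈ Set.Ioi (0:ℝ),
      Real.exp (-t^2 + 2*t*y + h * Real.log t) ≤ c * Real.exp (-(t - t₀)^2) := by
    intro t ht
    have htpos : 0 < t := ht
    rw [hc, ← Real.exp_add]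
    apply Real.exp_le_exp.mpr
    rcases eq_or_lt_of_le hh with hh0 | hhpos
    · have hy' : t₀ = y := by
        rw [ht0, hs, ← hh0,
          show (0:ℝ)/2 + y^2/4 = (y/2)^2 by ring, Real.sqrt_sq (by positivity)]
        ring
      rw [← hh0]; nlinarith
    · have ht0pos : 0 < t₀ := by nlinarith [ht0sq, mul_nonneg ht0nn hy]
      have hlog : Real.log t - Real.log t₀ ≤ t/t₀ - 1 := by
        rw [← Real.log_div (ne_of_gt htpos) (ne_of_gt ht0pos)]
        exact Real.log_le_sub_one_of_pos (by positivity)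
      have hmul : h * Real.log t ≤ h * Real.log t₀ + h * (t/t₀ - 1) := by nlinarith
      have hh2 : h = 2*t₀^2 - 2*t₀*y := by linarith [ht0sq]
      have hdiv : h * (t/t₀ - 1) = (2*t₀ - 2*y) * (t - t₀) := by
        rw [hh2]; field_simp
      have final : h * Real.log t ≤ h * Real.log t₀ + (2*t₀-2*y)*(t-t₀) :=
        hdiv ▸ hmul
      nlinarith [final]
  have hg : Integrable (fun t : ℝ => c * Real.exp (-(t - t₀)^2)) := by
    apply Integrable.const_mul
    have h1 : Integrable (fun x : ℝ => Real.exp (-1 * x^2)) :=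
      integrable_exp_neg_mul_sq one_pos
    have h2 := h1.comp_sub_right t₀
    simpa using h2
  calc (∫ t in Set.Ioi (0:ℝ), Real.exp (-t^2 + 2*t*y + h * Real.log t))
      ≤ ∫ t in Set.Ioi (0:ℝ), c * Real.exp (-(t-t₀)^2) := by
        apply integral_mono_of_nonneg
        · filter_upwards with t using (Real.exp_pos _).le
        · exact hg.restrict
        · filter_upwards [ae_restrict_mem measurableSet_Ioi] with t ht using key t ht
    _ ≤ ∫ t : ℝ, c * Real.exp (-(t-t₀)^2) :=
        setIntegral_le_integral hg (by filter_upwards with t; positivity)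
    _ = c * Real.sqrt Real.pi := by
        rw [MeasureTheory.integral_const_mul]
        congr 1
        have heq : (fun t : ℝ => Real.exp (-(t-t₀)^2))
            = fun t => (fun x : ℝ => Real.exp (-1*x^2)) (t - t₀) := by
          funext t; ring_nf
        rw [heq, integral_sub_right_eq_self (fun x : ℝ => Real.exp (-1*x^2)) t₀,
          integral_gaussian]
        simp
    _ ≤ (1 + Real.sqrt Real.pi) * c := by nlinarith [Real.sqrt_nonneg Real.pi]
end

section
/- Fix j > 0 and h ≥ 0, and let 𝓕(z) = e^{-jz²/2}·H(-√j z) and 𝓤(z) = e^{-jz²/2}·H(√j z) with H(y) = ∫₀^∞ e^{-t²-2ty} t^h dt. Then the Wronskian W(𝓕,𝓤) = 𝓕'·𝓤 - 𝓕·𝓤' is constant in z and equals 2^{-h}·√(jπ)·Γ(h+1); in particular W > 0 and 𝓕, 𝓤 are linearly independent solutions. -/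
/-!
`H = M h` for the integral `M s y = ∫₀^∞ e^{-t²-2ty} t^s dt`. Differentiating under the
integral sign gives `M s' = -2 M (s+1)`, and integrating `d/dt (e^{-t²-2ty} t^s)` over
`(0, ∞)` gives the recurrence `s M (s-1) = 2 M (s+1) + 2y M s`. Together they show that
`e^{-a²} W(M s ∘ neg, M s)(a)` has zero derivative, so it equals its value at `a = 0`, a
product of two Gamma values that the duplication formula turns into `2^{-s} √π Γ(s+1)`.
The Wronskian of `𝓕, 𝓤` reduces to this one: multiplying both functions by `e^{-jz²/2}`
scales the Wronskian by `e^{-jz²}`, and rescaling the variable by `√j` scales it by `√j`.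
-/

open MeasureTheory Real Set Filter Topology

section Wronskian

variable {𝕜 : Type*} [NontriviallyNormedField 𝕜]

noncomputable def wronskian (f g : 𝕜 → 𝕜) (x : 𝕜) : 𝕜 :=
  deriv f x * g x - f x * deriv g x

theorem wronskian_mul_left {e f g : 𝕜 → 𝕜} {x : 𝕜} (he : DifferentiableAt 𝕜 e x)
    (hf : DifferentiableAt 𝕜 f x) (hg : DifferentiableAt 𝕜 g x) :
    wronskian (fun y => e y * f y) (fun y => e y * g y) x = e x ^ 2 * wronskian f g x := by
  simp only [wronskian, deriv_fun_mul he hf, deriv_fun_mul he hg]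
  ring

theorem wronskian_comp_mul_left (c : 𝕜) (f g : 𝕜 → 𝕜) (x : 𝕜) :
    wronskian (fun y => f (c * y)) (fun y => g (c * y)) x = c * wronskian f g (c * x) := by
  simp only [wronskian, deriv_comp_mul_left c f x, deriv_comp_mul_left c g x, smul_eq_mul]
  ring

theorem linearIndependent_of_wronskian_ne_zero {f g : 𝕜 → 𝕜} {x : 𝕜}
    (hW : wronskian f g x ≠ 0) : LinearIndependent 𝕜 ![f, g] := by
  rw [linearIndependent_fin2]
  refine ⟨fun hg => hW ?_, fun a hfg => hW ?_⟩
  · simp_all [wronskian]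
  · simp only [Matrix.cons_val_one, Matrix.cons_val_zero] at hfg
    subst hfg
    simp only [wronskian, Pi.smul_apply, smul_eq_mul]
    rw [show a • g = fun y => a * g y from rfl, deriv_const_mul_field']
    ring

end Wronskian

/-- `Γ(s+1) H_{-s-1}(y)`, where `H_ν` is the Hermite function. -/
noncomputable def hermiteIntegral (s y : ℝ) : ℝ :=
  ∫ t in Ioi (0:ℝ), exp (-t ^ 2 - 2 * t * y) * t ^ s

namespace hermiteIntegral

variable {s : ℝ}

theorem integrand_le (s y : ℝ) {t : ℝ} (ht : 0 ≤ t) :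
    exp (-t ^ 2 - 2 * t * y) * t ^ s ≤ exp (2 * y ^ 2) * (t ^ s * exp (-(1/2) * t ^ 2)) := by
  have hexp : exp (-t ^ 2 - 2 * t * y) ≤ exp (2 * y ^ 2) * exp (-(1/2) * t ^ 2) := by
    rw [← exp_add]
    exact exp_le_exp.mpr (by nlinarith [sq_nonneg (t + 2 * y)])
  calc exp (-t ^ 2 - 2 * t * y) * t ^ s ≤ exp (2 * y ^ 2) * exp (-(1/2) * t ^ 2) * t ^ s := by
        gcongr
    _ = _ := by ring

theorem integrableOn_integrand (hs : -1 < s) (y : ℝ) :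
    IntegrableOn (fun t => exp (-t ^ 2 - 2 * t * y) * t ^ s) (Ioi 0) := by
  have hgauss := integrableOn_rpow_mul_exp_neg_mul_sq (by norm_num : (0:ℝ) < 1/2) hs
  refine (hgauss.const_mul (exp (2 * y ^ 2))).mono' (by fun_prop) ?_
  filter_upwards [ae_restrict_mem measurableSet_Ioi] with t (ht : 0 < t)
  rw [norm_of_nonneg (by positivity)]
  exact integrand_le s y ht.le

theorem tendsto_integrand_atTop (s y : ℝ) :
    Tendsto (fun t => exp (-t ^ 2 - 2 * t * y) * t ^ s) atTop (𝓝 0) := by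
  have hgauss : Tendsto (fun t : ℝ => t ^ s * exp (-(1/2) * t ^ 2)) atTop (𝓝 0) :=
    (rpow_mul_exp_neg_mul_sq_isLittleO_exp_neg (by norm_num : (0:ℝ) < 1/2) s
      ).tendsto_zero_of_tendsto
        (tendsto_exp_atBot.comp <| tendsto_id.const_mul_atTop_of_neg (by norm_num))
  refine tendsto_of_tendsto_of_tendsto_of_le_of_le' tendsto_const_nhds
    (mul_zero (exp (2 * y ^ 2)) ▸ hgauss.const_mul (exp (2 * y ^ 2))) ?_ ?_
  all_goals filter_upwards [eventually_ge_atTop 0] with t ht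
  · positivity
  · exact integrand_le s y ht

theorem hasDerivAt (hs : -1 < s) (y : ℝ) :
    HasDerivAt (hermiteIntegral s) (-2 * hermiteIntegral (s + 1) y) y := by
  have hs1 : -1 < s + 1 := by linarith
  have key := hasDerivAt_integral_of_dominated_loc_of_deriv_le
    (μ := volume.restrict (Ioi 0)) (F := fun y t => exp (-t ^ 2 - 2 * t * y) * t ^ s)
    (F' := fun y t => -2 * (exp (-t ^ 2 - 2 * t * y) * t ^ (s + 1)))
    (bound := fun t => 2 * (exp (-t ^ 2 - 2 * t * (y - 1)) * t ^ (s + 1)))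
    (Metric.ball_mem_nhds y one_pos) (.of_forall fun _ => by fun_prop)
    (integrableOn_integrand hs y) (by fun_prop) ?_
    ((integrableOn_integrand hs1 (y - 1)).const_mul 2) ?_
  · rw [integral_const_mul] at key
    exact key.2
  all_goals filter_upwards [ae_restrict_mem measurableSet_Ioi] with t (ht : 0 < t) x hx
  · have hxy : y - 1 ≤ x := by
      have := (abs_lt.mp (Metric.mem_ball.mp hx)).1
      linarith
    rw [norm_mul, norm_neg, Real.norm_two, norm_of_nonneg (by positivity)]
    gcongr
  · have hinner : HasDerivAt (fun x => -t ^ 2 - 2 * t * x) (-(2 * t)) x := by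
      simpa using ((hasDerivAt_id x).const_mul (2 * t)).const_sub (-t ^ 2)
    refine (hinner.exp.mul_const (t ^ s)).congr_deriv ?_
    rw [rpow_add_one ht.ne']
    ring

theorem differentiable (hs : -1 < s) : Differentiable ℝ (hermiteIntegral s) :=
  fun y => (hasDerivAt hs y).differentiableAt

theorem hasDerivAt_integrand (s y : ℝ) {t : ℝ} (ht : 0 < t) :
    HasDerivAt (fun t => exp (-t ^ 2 - 2 * t * y) * t ^ s)
      (s * (exp (-t ^ 2 - 2 * t * y) * t ^ (s - 1)) +
        (-2 * (exp (-t ^ 2 - 2 * t * y) * t ^ (s + 1)) +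
          -2 * y * (exp (-t ^ 2 - 2 * t * y) * t ^ s))) t := by
  have hinner : HasDerivAt (fun t => -t ^ 2 - 2 * t * y) (-(2 * t) - 2 * y) t := by
    refine ((hasDerivAt_pow 2 t).fun_neg.fun_sub
      (((hasDerivAt_id' t).const_mul 2).mul_const y)).congr_deriv ?_
    ring
  refine (hinner.exp.mul (hasDerivAt_rpow_const (p := s) (Or.inl ht.ne'))).congr_deriv ?_
  rw [rpow_add_one ht.ne']
  ring

theorem recurrence (hs : 0 < s) (y : ℝ) :
    s * hermiteIntegral (s - 1) y =
      2 * hermiteIntegral (s + 1) y + 2 * y * hermiteIntegral s y := by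
  have i_s := integrableOn_integrand (by linarith : -1 < s) y
  have i_succ := integrableOn_integrand (by linarith : -1 < s + 1) y
  have i_pred := integrableOn_integrand (by linarith : -1 < s - 1) y
  have hcont : ContinuousWithinAt (fun t => exp (-t ^ 2 - 2 * t * y) * t ^ s) (Ici 0) 0 :=
    ((continuous_exp.comp (by fun_prop)).continuousAt.mul
      (continuousAt_rpow_const 0 s (Or.inr hs.le))).continuousWithinAt
  have hFTC := integral_Ioi_of_hasDerivAt_of_tendsto hcont
    (fun t ht => hasDerivAt_integrand s y ht)
    ((i_pred.const_mul s).fun_add ((i_succ.const_mul (-2)).fun_add (i_s.const_mul (-2 * y))))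
    (tendsto_integrand_atTop s y)
  rw [integral_add (i_pred.const_mul s) ((i_succ.const_mul (-2)).fun_add (i_s.const_mul (-2 * y))),
    integral_add (i_succ.const_mul (-2)) (i_s.const_mul (-2 * y)), integral_const_mul,
    integral_const_mul, integral_const_mul] at hFTC
  simp only [zero_rpow hs.ne', mul_zero, sub_zero] at hFTC
  unfold hermiteIntegral
  linarith

theorem apply_zero (hs : -1 < s) : hermiteIntegral s 0 = Gamma ((s + 1) / 2) / 2 := by
  have hrw : hermiteIntegral s 0 = ∫ t in Ioi (0:ℝ), t ^ s * exp (-t ^ (2:ℝ)) := by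
    refine setIntegral_congr_fun measurableSet_Ioi fun t _ => ?_
    rw [rpow_two]
    ring_nf
  rw [hrw, integral_rpow_mul_exp_neg_rpow two_pos hs]
  ring

theorem wronskian_neg (hs : -1 < s) (a : ℝ) :
    wronskian (fun y => hermiteIntegral s (-y)) (hermiteIntegral s) a =
      2 * (hermiteIntegral (s + 1) (-a) * hermiteIntegral s a +
        hermiteIntegral s (-a) * hermiteIntegral (s + 1) a) := by
  simp only [wronskian, deriv_comp_neg, (hasDerivAt hs _).deriv]
  ring

theorem hasDerivAt_exp_mul_wronskian_neg (hs : -1 < s) (a : ℝ) :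
    HasDerivAt (fun a => exp (-a ^ 2) *
      wronskian (fun y => hermiteIntegral s (-y)) (hermiteIntegral s) a) 0 a := by
  have hs1 : -1 < s + 1 := by linarith
  have hE : HasDerivAt (fun a => exp (-a ^ 2)) (-(2 * a) * exp (-a ^ 2)) a := by
    simpa [mul_comm] using (hasDerivAt_pow 2 a).neg.exp
  have hneg : ∀ {r}, -1 < r → HasDerivAt (fun a => hermiteIntegral r (-a))
      (-2 * hermiteIntegral (r + 1) (-a) * -1) a :=
    fun hr => (hasDerivAt hr (-a)).comp a (hasDerivAt_neg a)
  have hcross : HasDerivAt (fun a => exp (-a ^ 2) *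
      (hermiteIntegral (s + 1) (-a) * hermiteIntegral s a +
        hermiteIntegral s (-a) * hermiteIntegral (s + 1) a)) 0 a := by
    refine (hE.fun_mul (((hneg hs1).fun_mul (hasDerivAt hs a)).fun_add
      ((hneg hs).fun_mul (hasDerivAt hs1 a)))).congr_deriv ?_
    have hrec := recurrence (by linarith : 0 < s + 1) a
    have hrec' := recurrence (by linarith : 0 < s + 1) (-a)
    rw [add_sub_cancel_right] at hrec hrec'
    linear_combination (exp (-a ^ 2) * hermiteIntegral s (-a)) * hrec -
      (exp (-a ^ 2) * hermiteIntegral s a) * hrec'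
  simpa only [wronskian_neg hs, mul_left_comm _ (2:ℝ), mul_zero] using hcross.const_mul 2

theorem exp_mul_wronskian_neg (hs : -1 < s) (a : ℝ) :
    exp (-a ^ 2) * wronskian (fun y => hermiteIntegral s (-y)) (hermiteIntegral s) a =
      2 ^ (-s) * √π * Gamma (s + 1) := by
  rw [is_const_of_deriv_eq_zero (fun x => (hasDerivAt_exp_mul_wronskian_neg hs x).differentiableAt)
    (fun x => (hasDerivAt_exp_mul_wronskian_neg hs x).deriv) a 0, wronskian_neg hs]
  have hdup := Gamma_mul_Gamma_add_half ((s + 1) / 2)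
  rw [show (s + 1) / 2 + 1 / 2 = (s + 1 + 1) / 2 by ring, show 2 * ((s + 1) / 2) = s + 1 by ring,
    show 1 - (s + 1) = -s by ring] at hdup
  rw [neg_zero, apply_zero hs, apply_zero (by linarith : -1 < s + 1), zero_pow two_ne_zero,
    neg_zero, exp_zero]
  linear_combination hdup

end hermiteIntegral

/-- The Wronskian of `𝓕(z) = e^{-jz²/2} H(-√j z)` and `𝓤(z) = e^{-jz²/2} H(√j z)`, where
`H(y) = ∫₀^∞ e^{-t²-2ty} t^h dt`, is constant in `z` and equals `2^{-h} √(jπ) Γ(h+1) > 0`;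
in particular `𝓕` and `𝓤` are linearly independent. -/
theorem stmt_4 (j h : ℝ) (hj : 0 < j) (hh : 0 ≤ h)
    (H F U : ℝ → ℝ)
    (hH : ∀ y, H y = ∫ t in Set.Ioi (0:ℝ), Real.exp (-t^2 - 2*t*y) * t ^ h)
    (hF : ∀ z, F z = Real.exp (-j*z^2/2) * H (-(Real.sqrt j * z)))
    (hU : ∀ z, U z = Real.exp (-j*z^2/2) * H (Real.sqrt j * z)) :
    (∀ z : ℝ, deriv F z * U z - F z * deriv U z
        = (2:ℝ) ^ (-h) * Real.sqrt (j * Real.pi) * Real.Gamma (h+1)) ∧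
    0 < (2:ℝ) ^ (-h) * Real.sqrt (j * Real.pi) * Real.Gamma (h+1) ∧
    LinearIndependent ℝ ![F, U] := by
  have hh' : -1 < h := by linarith
  obtain rfl : H = hermiteIntegral h := funext hH
  obtain rfl : F = fun z => exp (-j * z ^ 2 / 2) * hermiteIntegral h (-(√j * z)) := funext hF
  obtain rfl : U = fun z => exp (-j * z ^ 2 / 2) * hermiteIntegral h (√j * z) := funext hU
  have hdiff := hermiteIntegral.differentiable hh'
  have hW : ∀ z, wronskian (fun z => exp (-j * z ^ 2 / 2) * hermiteIntegral h (-(√j * z)))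
      (fun z => exp (-j * z ^ 2 / 2) * hermiteIntegral h (√j * z)) z =
        2 ^ (-h) * √(j * π) * Gamma (h + 1) := by
    intro z
    have hE : exp (-j * z ^ 2 / 2) ^ 2 = exp (-(√j * z) ^ 2) := by
      rw [← exp_nat_mul, mul_pow, sq_sqrt hj.le]
      ring_nf
    rw [wronskian_mul_left (by fun_prop) (by fun_prop) (by fun_prop),
      wronskian_comp_mul_left √j (fun y => hermiteIntegral h (-y)), hE, mul_left_comm,
      hermiteIntegral.exp_mul_wronskian_neg hh', sqrt_mul hj.le]
    ring
  have hpos : 0 < (2:ℝ) ^ (-h) * √(j * π) * Gamma (h + 1) := by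
    have := Gamma_pos_of_pos (by linarith : 0 < h + 1)
    positivity
  exact ⟨hW, hpos, linearIndependent_of_wronskian_ne_zero ((hW 0).trans_ne hpos.ne')⟩
end
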